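/- arXiv:2012.02213 — 2 statements merged into one kernel-verified Lean document; each statement's English description precedes it below -/
import Mathlib

section
/- Let X ∈ L_n be a fixed point of T, i.e., X maximizes Y ↦ X·Y over L_n. Then X² = DX where D is the diagonal matrix with D_{ii} = ∑_j X_{ij}², and each D_{ii} ≥ 1. -/
/-!
Write `X` as the Gram matrix of unit vectors `v₁, …, vₙ`. Replacing `vᵢ` by any other unit vector
`u` keeps the Gram matrix in `L_n` and changes `X · Y` by `2⟪u - vᵢ, gᵢ - Xᵢᵢ vᵢ⟫`, where
`gᵢ = ∑_q X_iq v_q`. Maximality at `u = vᵢ` is the equality case of Cauchy–Schwarz, so `gᵢ` is a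
multiple of `vᵢ`, namely `gᵢ = ⟪gᵢ, vᵢ⟫ vᵢ = Dᵢᵢ vᵢ`; pairing with `v_m` gives `(X²)ᵢₘ = Dᵢᵢ Xᵢₘ`.
The bound `Dᵢᵢ ≥ Xᵢᵢ² = 1` is immediate.
-/

def elliptope (n : ℕ) : Set (Matrix (Fin n) (Fin n) ℝ) :=
  {X | X.PosSemidef ∧ ∀ i, X i i = 1}

def frob {n : ℕ} (A B : Matrix (Fin n) (Fin n) ℝ) : ℝ :=
  ∑ i, ∑ j, A i j * B i j

open Matrix Finset
open scoped RealInnerProductSpace ComplexOrder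

theorem Matrix.PosSemidef.exists_gram_eq {𝕜 ι : Type*} [RCLike 𝕜] [Fintype ι] {A : Matrix ι ι 𝕜}
    (hA : A.PosSemidef) : ∃ v : ι → EuclideanSpace 𝕜 ι, gram 𝕜 v = A := by
  classical
  open scoped MatrixOrder in
  obtain ⟨B, rfl⟩ := CStarAlgebra.nonneg_iff_eq_star_mul_self.mp hA.nonneg
  refine ⟨fun j => WithLp.toLp 2 (fun k => B k j), ?_⟩
  ext i j
  simp [gram_apply, mul_apply, PiLp.inner_apply, mul_comm]

variable {E : Type*} [NormedAddCommGroup E] [InnerProductSpace ℝ E]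

theorem eq_inner_smul_of_forall_inner_le {s v : E} (hv : ‖v‖ = 1)
    (h : ∀ u : E, ‖u‖ = 1 → ⟪s, u⟫ ≤ ⟪s, v⟫) : s = ⟪s, v⟫ • v := by
  rcases eq_or_ne s 0 with rfl | hs
  · simp
  have hle : ‖s‖ ≤ ⟪s, v⟫ := by
    have h' := h (‖s‖⁻¹ • s) (norm_smul_inv_norm hs)
    rwa [real_inner_smul_right, real_inner_self_eq_norm_sq, sq, inv_mul_cancel_left₀
      (norm_ne_zero_iff.mpr hs)] at h'
  have heq : ⟪s, v⟫ = ‖s‖ * ‖v‖ :=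
    le_antisymm (real_inner_le_norm s v) (by rwa [hv, mul_one])
  have hsv := inner_eq_norm_mul_iff_real.mp heq
  rw [hv, one_smul] at hsv
  rw [heq, hv, mul_one, ← hsv]

theorem gram_mul_gram_apply {ι : Type*} [Fintype ι] (v : ι → E) (i m : ι) :
    (gram ℝ v * gram ℝ v) i m = ⟪∑ q, gram ℝ v i q • v q, v m⟫ := by
  simp [mul_apply, sum_inner, real_inner_smul_left, gram_apply]

section Gram

variable {n : ℕ}

theorem gram_mem_elliptope_iff (v : Fin n → E) : gram ℝ v ∈ elliptope n ↔ ∀ j, ‖v j‖ = 1 := by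
  simp [elliptope, posSemidef_gram, gram_apply, pow_eq_one_iff_of_nonneg (norm_nonneg _)]

theorem one_le_sum_sq_of_mem_elliptope {X : Matrix (Fin n) (Fin n) ℝ} (hX : X ∈ elliptope n)
    (i : Fin n) : 1 ≤ ∑ j, X i j ^ 2 :=
  calc (1 : ℝ) = X i i ^ 2 := by rw [hX.2 i, one_pow]
    _ ≤ ∑ j, X i j ^ 2 :=
      single_le_sum (f := fun j => X i j ^ 2) (fun j _ => sq_nonneg _) (mem_univ i)

theorem frob_gram_add_single {X : Matrix (Fin n) (Fin n) ℝ} (hX : X.IsSymm) (v : Fin n → E)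
    (i : Fin n) (d : E) :
    frob X (gram ℝ (v + Pi.single i d)) =
      frob X (gram ℝ v) + 2 * ⟪d, ∑ q, X i q • v q⟫ + X i i * ‖d‖ ^ 2 := by
  have hleft : ∑ p, ∑ q, X p q * ⟪(Pi.single i d : Fin n → E) p, v q⟫ = ⟪d, ∑ q, X i q • v q⟫ := by
    rw [Fintype.sum_eq_single i fun p hp => by simp [hp]]
    simp [inner_sum, real_inner_smul_right]
  have hright : ∑ p, ∑ q, X p q * ⟪v p, (Pi.single i d : Fin n → E) q⟫ = ⟪d, ∑ q, X i q • v q⟫ := by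
    rw [sum_comm, ← hleft]
    simp_rw [hX.apply, real_inner_comm]
  have hdiag : ∑ p, ∑ q, X p q * ⟪(Pi.single i d : Fin n → E) p, (Pi.single i d : Fin n → E) q⟫ =
      X i i * ‖d‖ ^ 2 := by
    rw [Fintype.sum_eq_single i fun p hp => by simp [hp],
      Fintype.sum_eq_single i fun q hq => by simp [hq]]
    simp
  simp only [frob, gram_apply, Pi.add_apply, inner_add_left, inner_add_right, mul_add,
    sum_add_distrib]
  rw [hleft, hright, hdiag]
  ring

theorem frob_gram_update {X : Matrix (Fin n) (Fin n) ℝ} (hX : X.IsSymm) (v : Fin n → E)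
    (i : Fin n) (u : E) :
    frob X (gram ℝ (Function.update v i u)) =
      frob X (gram ℝ v) + 2 * ⟪u - v i, ∑ q, X i q • v q⟫ + X i i * ‖u - v i‖ ^ 2 := by
  have hupd : Function.update v i u = v + Pi.single i (u - v i) := by
    ext1 p
    rcases eq_or_ne p i with rfl | hp <;> simp [*]
  rw [hupd, frob_gram_add_single hX]

theorem sum_smul_eq_inner_smul_of_forall_frob_gram_update_le {X : Matrix (Fin n) (Fin n) ℝ}
    (hX : X.IsSymm) {v : Fin n → E} {i : Fin n} (hv : ‖v i‖ = 1)
    (hmax : ∀ u : E, ‖u‖ = 1 → frob X (gram ℝ (Function.update v i u)) ≤ frob X (gram ℝ v)) :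
    ∑ q, X i q • v q = ⟪∑ q, X i q • v q, v i⟫ • v i := by
  set g := ∑ q, X i q • v q
  have hsphere : ∀ u : E, ‖u‖ = 1 → ⟪g - X i i • v i, u⟫ ≤ ⟪g - X i i • v i, v i⟫ := by
    intro u hu
    have h := hmax u hu
    rw [frob_gram_update hX, norm_sub_sq_real, hu, hv, inner_sub_left] at h
    simp only [inner_sub_left, real_inner_smul_left, real_inner_self_eq_norm_sq, hv,
      real_inner_comm (v i) u] at h ⊢
    rw [real_inner_comm (v i) g, real_inner_comm u g]
    linarith
  have hs := eq_inner_smul_of_forall_inner_le hv hsphere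
  rw [inner_sub_left, real_inner_smul_left, real_inner_self_eq_norm_sq, hv, sub_smul] at hs
  simpa using congrArg (· + X i i • v i) hs

end Gram

theorem stmt10 {n : ℕ} (X : Matrix (Fin n) (Fin n) ℝ) (hX : X ∈ elliptope n)
    (hfix : ∀ Y ∈ elliptope n, frob X Y ≤ frob X X) :
    X * X = Matrix.diagonal (fun i => ∑ j, (X i j) ^ 2) * X ∧
      ∀ i : Fin n, (1 : ℝ) ≤ ∑ j, (X i j) ^ 2 := by
  refine ⟨?_, one_le_sum_sq_of_mem_elliptope hX⟩
  obtain ⟨v, rfl⟩ := hX.1.exists_gram_eq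
  have hunit := (gram_mem_elliptope_iff v).mp hX
  have hsymm : (gram ℝ v).IsSymm := IsSymm.ext fun i j => by simp [gram_apply, real_inner_comm]
  have hmax : ∀ i, ∀ u : EuclideanSpace ℝ (Fin n), ‖u‖ = 1 →
      frob (gram ℝ v) (gram ℝ (Function.update v i u)) ≤ frob (gram ℝ v) (gram ℝ v) :=
    fun i u hu => hfix _ <| (gram_mem_elliptope_iff _).mpr fun j => by
      rcases eq_or_ne j i with rfl | hj <;> simp [*]
  have hrow : ∀ i, ∑ q, gram ℝ v i q • v q = (∑ j, gram ℝ v i j ^ 2) • v i := by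
    intro i
    rw [sum_smul_eq_inner_smul_of_forall_frob_gram_update_le hsymm (hunit i) (hmax i),
      ← gram_mul_gram_apply, mul_apply]
    exact congrArg (· • v i) <| sum_congr rfl fun q _ => by rw [sq, hsymm.apply i q]
  ext i m
  rw [gram_mul_gram_apply, hrow i, diagonal_mul, real_inner_smul_left, gram_apply]
end

section
/- For every c with −1 < c < 1, the 4×4 matrix X(c) with rows (1, −√(1−c²), 0, c), (−√(1−c²), 1, −c, 0), (0, −c, 1, −√(1−c²)), (c, 0, −√(1−c²), 1) lies in L_4 and satisfies X(c)² = 2·X(c); hence X(c) is a fixed point of linear optimization in L_4, giving an infinite family of distinct fixed points. -/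
noncomputable def Xc (c : ℝ) : Matrix (Fin 4) (Fin 4) ℝ :=
  !![1, -Real.sqrt (1 - c ^ 2), 0, c;
     -Real.sqrt (1 - c ^ 2), 1, -c, 0;
     0, -c, 1, -Real.sqrt (1 - c ^ 2);
     c, 0, -Real.sqrt (1 - c ^ 2), 1]

/-!
A symmetric matrix `A` with `A² = r A` (`r > 0`) is `r⁻¹ AᵀA`, hence positive semidefinite, and so
is `r I - A`, which satisfies the same identity. Pairing `r I - A` with a positive semidefinite `Y`
gives `tr (A Y) ≤ r tr Y`; on the elliptope `tr Y = n = tr A`, so `A` maximises `Y ↦ frob A Y`, with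
value `tr (A²) = r n`. For `X(c)` the identity `X(c)² = 2 X(c)` is a direct computation using
`√(1 - c²)² = 1 - c²`, and `c` is read off the `(3, 0)` entry.
-/

open Matrix

namespace Matrix

variable {ι : Type*} [Fintype ι]

open scoped MatrixOrder in
theorem PosSemidef.trace_mul_nonneg [DecidableEq ι] {A B : Matrix ι ι ℝ} (hA : A.PosSemidef)
    (hB : B.PosSemidef) : 0 ≤ (A * B).trace := by
  obtain ⟨S, rfl⟩ := CStarAlgebra.nonneg_iff_eq_star_mul_self.mp hA.nonneg
  rw [Matrix.mul_assoc, trace_mul_comm]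
  exact (hB.mul_mul_conjTranspose_same S).trace_nonneg

theorem IsHermitian.posSemidef_of_mul_self_eq_smul {A : Matrix ι ι ℝ} (hA : A.IsHermitian)
    {r : ℝ} (hr : 0 < r) (hAA : A * A = r • A) : A.PosSemidef := by
  have hA' : A = r⁻¹ • (Aᴴ * A) := by
    rw [hA.eq, hAA, smul_smul, inv_mul_cancel₀ hr.ne', one_smul]
  rw [hA']
  exact (posSemidef_conjTranspose_mul_self A).smul (inv_nonneg.mpr hr.le)

theorem smul_one_sub_mul_self_of_mul_self_eq_smul [DecidableEq ι] {A : Matrix ι ι ℝ} {r : ℝ}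
    (hAA : A * A = r • A) : (r • 1 - A) * (r • 1 - A) = r • (r • 1 - A) := by
  simp only [sub_mul, mul_sub, Matrix.smul_mul, Matrix.mul_smul, Matrix.one_mul, Matrix.mul_one,
    hAA]
  module

theorem IsHermitian.trace_mul_le_of_mul_self_eq_smul [DecidableEq ι] {A Y : Matrix ι ι ℝ}
    (hA : A.IsHermitian) {r : ℝ} (hr : 0 < r) (hAA : A * A = r • A) (hY : Y.PosSemidef) :
    (A * Y).trace ≤ r * Y.trace := by
  have hB : (r • 1 - A).PosSemidef :=
    ((isHermitian_one.smul (IsSelfAdjoint.all r)).sub hA).posSemidef_of_mul_self_eq_smul hr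
      (smul_one_sub_mul_self_of_mul_self_eq_smul hAA)
  have hBY := hB.trace_mul_nonneg hY
  simp only [sub_mul, smul_mul, Matrix.one_mul, trace_sub, trace_smul, smul_eq_mul] at hBY
  linarith

end Matrix

theorem frob_eq_trace_transpose_mul {n : ℕ} (A B : Matrix (Fin n) (Fin n) ℝ) :
    frob A B = (Aᵀ * B).trace := by
  rw [frob, Finset.sum_comm]
  simp [trace, mul_apply]

theorem trace_eq_of_mem_elliptope {n : ℕ} {X : Matrix (Fin n) (Fin n) ℝ} (hX : X ∈ elliptope n) :
    X.trace = n := by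
  simp [trace, hX.2]

theorem frob_le_of_mul_self_eq_smul {n : ℕ} {X : Matrix (Fin n) (Fin n) ℝ} (hX : X ∈ elliptope n)
    {r : ℝ} (hr : 0 < r) (hXX : X * X = r • X) {Y : Matrix (Fin n) (Fin n) ℝ}
    (hY : Y ∈ elliptope n) : frob X Y ≤ frob X X := by
  have hXt : Xᵀ = X := hX.1.isHermitian.eq
  rw [frob_eq_trace_transpose_mul, frob_eq_trace_transpose_mul, hXt, hXX, trace_smul,
    trace_eq_of_mem_elliptope hX, smul_eq_mul, ← trace_eq_of_mem_elliptope hY]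
  exact hX.1.isHermitian.trace_mul_le_of_mul_self_eq_smul hr hXX hY.1

theorem Xc_apply_three_zero (c : ℝ) : Xc c 3 0 = c := rfl

theorem Xc_injective : Function.Injective Xc := fun c c' h => by
  rw [← Xc_apply_three_zero c, h, Xc_apply_three_zero]

theorem Xc_isHermitian (c : ℝ) : (Xc c).IsHermitian := by
  ext i j
  fin_cases i <;> fin_cases j <;> simp [Xc]

theorem Xc_diag (c : ℝ) (i : Fin 4) : Xc c i i = 1 := by
  fin_cases i <;> rfl

theorem Xc_mul_self {c : ℝ} (hc : c ^ 2 ≤ 1) : Xc c * Xc c = (2 : ℝ) • Xc c := by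
  have hs : Real.sqrt (1 - c ^ 2) ^ 2 = 1 - c ^ 2 := Real.sq_sqrt (by linarith)
  ext i j
  fin_cases i <;> fin_cases j <;> simp [Xc, mul_apply, Fin.sum_univ_four] <;> linarith

theorem Xc_mem_elliptope {c : ℝ} (hc : c ^ 2 ≤ 1) : Xc c ∈ elliptope 4 :=
  ⟨(Xc_isHermitian c).posSemidef_of_mul_self_eq_smul two_pos (Xc_mul_self hc), Xc_diag c⟩

theorem stmt16 (c : ℝ) (hc1 : -1 < c) (hc2 : c < 1) :
    Xc c ∈ elliptope 4 ∧ Xc c * Xc c = (2 : ℝ) • Xc c ∧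
      (∀ Y ∈ elliptope 4, frob (Xc c) Y ≤ frob (Xc c) (Xc c)) ∧
      (∀ c' : ℝ, -1 < c' → c' < 1 → Xc c' = Xc c → c' = c) := by
  have hc : c ^ 2 ≤ 1 := by nlinarith
  exact ⟨Xc_mem_elliptope hc, Xc_mul_self hc,
    fun Y hY => frob_le_of_mul_self_eq_smul (Xc_mem_elliptope hc) two_pos (Xc_mul_self hc) hY,
    fun c' _ _ h => Xc_injective h⟩
end
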